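/- Let (E,w,d) be an ultra triple, C ⊆ E finite, and m, r non-negative integers, j ∈ {1,…,m}. If (c_1,…,c_m) is a greedy r-removed m-permutation of C, then the quantity w(c_j) + dist_r({c_1,…,c_{j-1}}, c_j) does not depend on the choice of greedy r-removed m-permutation; it depends only on C, r, and j. -/

import Mathlib

open Finset

noncomputable def distR {E : Type*} [DecidableEq E] (d : E → E → ℝ) (r : ℕ)
    (C : Finset E) (v : E) : ℝ :=
  if C.card ≤ r then 0
  else sSup {s : ℝ | ∃ A ⊆ C, A.card = C.card - r ∧ s = ∑ x ∈ A, d v x}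

noncomputable def perList {E : Type*} [DecidableEq E] (w : E → ℝ) (d : E → E → ℝ)
    (r : ℕ) : List E → ℝ
  | [] => 0
  | a :: l => perList w d r l + w a + distR d r l.toFinset a

noncomputable def perR {E : Type*} [DecidableEq E] (w : E → ℝ) (d : E → E → ℝ)
    (r : ℕ) (A : Finset E) : ℝ := perList w d r A.toList

/-- `b` is a projection of `c` onto the finite set `A`. -/
def IsProj {E : Type*} [DecidableEq E] (d : E → E → ℝ) (A : Finset E) (c b : E) : Prop :=
  (c ∈ A ∧ b = c) ∨ (c ∉ A ∧ b ∈ A ∧ ∀ x ∈ A, d c b ≤ d c x)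

/-- `v` is a sequential projection of the ordered set `c` (of length `k`) onto `A`. -/
def IsSeqProj {E : Type*} [DecidableEq E] (d : E → E → ℝ) (A : Finset E)
    (k : ℕ) (c v : ℕ → E) : Prop :=
  ∀ i < k, IsProj d (A \ (Finset.range i).image v) (c i) (v i)

/-- `c` is a greedy `r`-removed `m`-permutation of `C`. -/
def IsGreedy {E : Type*} [DecidableEq E] (w : E → ℝ) (d : E → E → ℝ) (r : ℕ)
    (C : Finset E) (m : ℕ) (c : ℕ → E) : Prop :=
  (∀ i < m, c i ∈ C) ∧ (∀ i < m, ∀ j < m, c i = c j → i = j) ∧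
  ∀ i < m, ∀ x ∈ C, x ∉ (Finset.range i).image c →
    perR w d r (insert x ((Finset.range i).image c)) ≤
      perR w d r (insert (c i) ((Finset.range i).image c))

noncomputable def distF {E : Type*} [DecidableEq E] (d : E → E → ℝ)
    (f : ℕ → ℝ → ℝ) (C : Finset E) (x : E) : ℝ :=
  let l := (C.toList.map (fun c => d x c)).insertionSort (· ≤ ·)
  ∑ i ∈ Finset.range l.length, f (i + 1) (l.getD i 0)

/-!
The key fact is an exchange law: in an ultrametric,
`dist_r(A, u) + dist_r(A ∪ {u}, v) = dist_r(A, v) + dist_r(A ∪ {v}, u)`.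
It makes `per_r` independent of the ordering, so
`per_r(A ∪ {x}) = per_r(A) + w(x) + dist_r(A, x)`.
A second exchange argument shows that a `(j+1)`-set `B` always has an element `y`
outside a given `j`-set `P` with `dist_r(B ∖ {y}, y) ≤ dist_r(P, y)`. By induction on `j`,
the length-`j` prefix of a greedy permutation therefore maximises `per_r` among the
`j`-subsets of `C`. Hence `per_r` of each prefix depends only on `C`, `r` and `j`, and the
`j`-th increment `w(c_j) + dist_r({c_1, …, c_{j-1}}, c_j)` is the difference of two of them.
-/

section

variable {E : Type*} [DecidableEq E]

section distR

variable (d : E → E → ℝ) (r : ℕ)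

theorem distR_eq_sup' (C : Finset E) (v : E) :
    distR d r C v = (C.powersetCard (C.card - r)).sup'
      (powersetCard_nonempty.mpr (Nat.sub_le _ _)) (fun A => ∑ x ∈ A, d v x) := by
  unfold distR
  split_ifs with h
  · simp [Nat.sub_eq_zero_of_le h]
  · rw [sup'_eq_csSup_image]
    congr 1
    ext s
    simp [eq_comm, and_assoc]

theorem distR_of_card_le {C : Finset E} (v : E) (h : C.card ≤ r) : distR d r C v = 0 := by
  simp [distR, h]

theorem sum_le_distR {A C : Finset E} (v : E) (hAC : A ⊆ C) (hA : A.card = C.card - r) :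
    ∑ x ∈ A, d v x ≤ distR d r C v := by
  rw [distR_eq_sup']
  exact le_sup' (fun A => ∑ x ∈ A, d v x) (mem_powersetCard.mpr ⟨hAC, hA⟩)

theorem exists_distR_eq_sum (C : Finset E) (v : E) :
    ∃ A ⊆ C, A.card = C.card - r ∧ distR d r C v = ∑ x ∈ A, d v x := by
  obtain ⟨A, hA, h⟩ := exists_mem_eq_sup' (powersetCard_nonempty.mpr (Nat.sub_le C.card r))
    (fun A => ∑ x ∈ A, d v x)
  obtain ⟨hAC, hAcard⟩ := mem_powersetCard.mp hA
  exact ⟨A, hAC, hAcard, (distR_eq_sup' d r C v).trans h⟩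

theorem distR_insert_le_of_le (S : Finset E) {x z y : E} (hzS : z ∉ S) (hxS : x ∉ S)
    (hle : d y z ≤ d y x) :
    distR d r (insert z S) y ≤ distR d r (insert x S) y := by
  obtain ⟨A, hAS, hAc, hA⟩ := exists_distR_eq_sum d r (insert z S) y
  rw [hA]
  rw [card_insert_of_notMem hzS] at hAc
  have hcx : (insert x S).card = S.card + 1 := card_insert_of_notMem hxS
  by_cases hzA : z ∈ A
  · rcases eq_or_ne x z with rfl | hxz
    · exact sum_le_distR d r y hAS (by omega)
    have hxA : x ∉ A.erase z := fun h =>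
      (mem_insert.mp (hAS (mem_of_mem_erase h))).elim hxz hxS
    have hApos : 0 < A.card := card_pos.mpr ⟨z, hzA⟩
    calc ∑ a ∈ A, d y a = d y z + ∑ a ∈ A.erase z, d y a := (add_sum_erase _ _ hzA).symm
      _ ≤ d y x + ∑ a ∈ A.erase z, d y a := by gcongr
      _ = ∑ a ∈ insert x (A.erase z), d y a := (sum_insert hxA).symm
      _ ≤ distR d r (insert x S) y :=
        sum_le_distR d r y (insert_subset_insert x (subset_insert_iff.mp hAS))
          (by rw [card_insert_of_notMem hxA, card_erase_of_mem hzA, hcx]; omega)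
  · exact sum_le_distR d r y
      (((subset_insert_iff_of_notMem hzA).mp hAS).trans (subset_insert x S)) (by omega)

theorem distR_exchange_le (hsymm : ∀ a b : E, a ≠ b → d a b = d b a)
    (hultra : ∀ a b c : E, a ≠ b → a ≠ c → b ≠ c → d a b ≤ max (d a c) (d b c))
    (A : Finset E) {u v : E} (hu : u ∉ A) (hv : v ∉ A) (huv : u ≠ v) :
    distR d r A u + distR d r (insert u A) v ≤ distR d r A v + distR d r (insert v A) u := by
  have hcu : (insert u A).card = A.card + 1 := card_insert_of_notMem hu
  have hcv : (insert v A).card = A.card + 1 := card_insert_of_notMem hv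
  rcases lt_or_ge A.card r with hAr | hrA
  · simp only [distR_of_card_le d r _ (le_of_lt hAr),
      distR_of_card_le d r (C := insert u A) _ (by omega),
      distR_of_card_le d r (C := insert v A) _ (by omega), le_refl]
  obtain ⟨B₁, hB₁A, hB₁c, hB₁⟩ := exists_distR_eq_sum d r A u
  obtain ⟨B₂, hB₂A, hB₂c, hB₂⟩ := exists_distR_eq_sum d r (insert u A) v
  rw [hcu] at hB₂c
  have hvB₁ : v ∉ B₁ := fun h => hv (hB₁A h)
  -- trade some `t ∈ B₂` (seen from `v`) for some `z ∉ B₁` (seen from `u`) at no loss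
  obtain ⟨t, htB₂, htA, z, hzA, hzB₁, hle⟩ :
      ∃ t ∈ B₂, B₂.erase t ⊆ A ∧ ∃ z ∈ insert v A, z ∉ B₁ ∧ d v t ≤ d u z := by
    by_cases huB₂ : u ∈ B₂
    · exact ⟨u, huB₂, subset_insert_iff.mp hB₂A, v, mem_insert_self v A, hvB₁,
        (hsymm v u huv.symm).le⟩
    have hB₂A' : B₂ ⊆ A := (subset_insert_iff_of_notMem huB₂).mp hB₂A
    obtain ⟨y, hyB₂, hyB₁⟩ := not_subset.mp fun h : B₂ ⊆ B₁ =>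
      (card_le_card h).not_gt (by omega)
    have hyA : y ∈ A := hB₂A' hyB₂
    have hyu : y ≠ u := fun h => hu (h ▸ hyA)
    have hyv : y ≠ v := fun h => hv (h ▸ hyA)
    refine ⟨y, hyB₂, (erase_subset y B₂).trans hB₂A', ?_⟩
    have hult : d v y ≤ max (d u v) (d u y) := by
      simpa only [hsymm v u huv.symm, hsymm y u hyu] using hultra v y u hyv.symm huv.symm hyu
    rcases le_max_iff.mp hult with h | h
    · exact ⟨v, mem_insert_self v A, hvB₁, h⟩
    · exact ⟨y, mem_insert_of_mem hyA, hyB₁, h⟩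
  have hB₂pos : 0 < B₂.card := card_pos.mpr ⟨t, htB₂⟩
  calc distR d r A u + distR d r (insert u A) v
      = ∑ x ∈ B₁, d u x + (d v t + ∑ x ∈ B₂.erase t, d v x) := by
        rw [hB₁, hB₂, add_sum_erase _ _ htB₂]
    _ ≤ ∑ x ∈ B₂.erase t, d v x + (d u z + ∑ x ∈ B₁, d u x) := by linarith
    _ = ∑ x ∈ B₂.erase t, d v x + ∑ x ∈ insert z B₁, d u x := by rw [sum_insert hzB₁]
    _ ≤ distR d r A v + distR d r (insert v A) u :=
        add_le_add (sum_le_distR d r v htA (by rw [card_erase_of_mem htB₂]; omega))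
          (sum_le_distR d r u (insert_subset hzA (hB₁A.trans (subset_insert v A)))
            (by rw [card_insert_of_notMem hzB₁, hcv]; omega))

theorem distR_exchange (hsymm : ∀ a b : E, a ≠ b → d a b = d b a)
    (hultra : ∀ a b c : E, a ≠ b → a ≠ c → b ≠ c → d a b ≤ max (d a c) (d b c))
    (A : Finset E) {u v : E} (hu : u ∉ A) (hv : v ∉ A) (huv : u ≠ v) :
    distR d r A u + distR d r (insert u A) v = distR d r A v + distR d r (insert v A) u :=
  le_antisymm (distR_exchange_le d r hsymm hultra A hu hv huv)
    (distR_exchange_le d r hsymm hultra A hv hu huv.symm)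

theorem exists_mem_sdiff_distR_erase_le
    (hultra : ∀ a b c : E, a ≠ b → a ≠ c → b ≠ c → d a b ≤ max (d a c) (d b c))
    {X Y : Finset E} (hXY : X.card + 1 = Y.card) :
    ∃ y ∈ Y \ X, distR d r (Y.erase y) y ≤ distR d r X y := by
  induction hn : (Y \ X).card using Nat.strong_induction_on generalizing Y with
  | _ n ih =>
    obtain ⟨y₀, hy₀⟩ : (Y \ X).Nonempty :=
      sdiff_nonempty.mpr fun h => (card_le_card h).not_gt (by omega)
    by_cases hXsubY : X ⊆ Y
    · have hX : X = Y.erase y₀ := eq_of_subset_of_card_le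
        (fun a ha => mem_erase.mpr ⟨fun h => (mem_sdiff.mp hy₀).2 (h ▸ ha), hXsubY ha⟩)
        (by rw [card_erase_of_mem (mem_sdiff.mp hy₀).1]; omega)
      exact ⟨y₀, hy₀, by rw [hX]⟩
    obtain ⟨x₀, hx₀⟩ : (X \ Y).Nonempty := sdiff_nonempty.mpr hXsubY
    -- replace the closest pair `z ∈ Y \ X`, `x ∈ X \ Y` and recurse
    obtain ⟨⟨z, x⟩, hzx, hmin⟩ :=
      exists_min_image ((Y \ X) ×ˢ (X \ Y)) (fun p => d p.1 p.2)
        ⟨(y₀, x₀), mem_product.mpr ⟨hy₀, hx₀⟩⟩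
    obtain ⟨hz, hx⟩ := mem_product.mp hzx
    obtain ⟨hzY, hzX⟩ := mem_sdiff.mp hz
    obtain ⟨hxX, hxY⟩ := mem_sdiff.mp hx
    have hxYz : x ∉ Y.erase z := fun h => hxY (mem_of_mem_erase h)
    have hsdiff : insert x (Y.erase z) \ X = (Y \ X).erase z := by
      ext a; grind
    have hYX : 0 < (Y \ X).card := card_pos.mpr ⟨z, hz⟩
    obtain ⟨y, hy, hle⟩ := ih _ (by rw [hsdiff, card_erase_of_mem hz]; omega)
      (Y := insert x (Y.erase z))
      (by rw [card_insert_of_notMem hxYz, card_erase_of_mem hzY]; omega) rfl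
    obtain ⟨hyY', hyX⟩ := mem_sdiff.mp hy
    have hyx : y ≠ x := fun h => hyX (h ▸ hxX)
    obtain ⟨hyz, hyY⟩ := mem_erase.mp ((mem_insert.mp hyY').resolve_left hyx)
    refine ⟨y, mem_sdiff.mpr ⟨hyY, hyX⟩, le_trans ?_ hle⟩
    have hdz : d y z ≤ d y x :=
      (hultra y z x hyz hyx (fun h => hzX (h ▸ hxX))).trans
        (max_le le_rfl (hmin (y, x) (mem_product.mpr ⟨mem_sdiff.mpr ⟨hyY, hyX⟩, hx⟩)))
    have hY : Y.erase y = insert z ((Y.erase z).erase y) := by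
      rw [erase_right_comm, insert_erase (mem_erase.mpr ⟨Ne.symm hyz, hzY⟩)]
    rw [hY, erase_insert_of_ne (Ne.symm hyx)]
    exact distR_insert_le_of_le d r _ (fun h => notMem_erase z Y (mem_of_mem_erase h))
      (fun h => hxYz (mem_of_mem_erase h)) hdz

end distR

section perR

variable (w : E → ℝ) (d : E → E → ℝ) (r : ℕ)

theorem perList_eq_of_perm (hsymm : ∀ a b : E, a ≠ b → d a b = d b a)
    (hultra : ∀ a b c : E, a ≠ b → a ≠ c → b ≠ c → d a b ≤ max (d a c) (d b c))
    {l₁ l₂ : List E} (h : l₁.Perm l₂) (hl₁ : l₁.Nodup) :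
    perList w d r l₁ = perList w d r l₂ := by
  induction h with
  | nil => rfl
  | cons a h ih =>
    simp only [perList, ih (List.nodup_cons.mp hl₁).2, List.toFinset_eq_of_perm _ _ h]
  | swap a b l =>
    simp only [List.nodup_cons, List.mem_cons, not_or] at hl₁
    obtain ⟨⟨hba, hbl⟩, hal, -⟩ := hl₁
    have hex := distR_exchange d r hsymm hultra l.toFinset (mt List.mem_toFinset.mp hal)
      (mt List.mem_toFinset.mp hbl) (Ne.symm hba)
    simp only [perList, List.toFinset_cons]
    linarith
  | trans h₁ _ ih₁ ih₂ => rw [ih₁ hl₁, ih₂ (h₁.nodup hl₁)]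

theorem perR_insert (hsymm : ∀ a b : E, a ≠ b → d a b = d b a)
    (hultra : ∀ a b c : E, a ≠ b → a ≠ c → b ≠ c → d a b ≤ max (d a c) (d b c))
    (A : Finset E) {x : E} (hx : x ∉ A) :
    perR w d r (insert x A) = perR w d r A + w x + distR d r A x := by
  rw [perR, perList_eq_of_perm w d r hsymm hultra (toList_insert hx) (nodup_toList _), perList,
    toList_toFinset, perR]

end perR

namespace IsGreedy

variable {w : E → ℝ} {d : E → E → ℝ} {r m : ℕ} {C : Finset E} {c : ℕ → E}

theorem card_image_range (hc : IsGreedy w d r C m c) {j : ℕ} (hj : j ≤ m) :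
    ((range j).image c).card = j := by
  rw [card_image_of_injOn, card_range]
  intro a ha b hb hab
  exact hc.2.1 a (by simp at ha; omega) b (by simp at hb; omega) hab

theorem image_range_subset (hc : IsGreedy w d r C m c) {j : ℕ} (hj : j ≤ m) :
    (range j).image c ⊆ C := by
  simp only [image_subset_iff, mem_range]
  exact fun i hi => hc.1 i (by omega)

theorem notMem_image_range (hc : IsGreedy w d r C m c) {j : ℕ} (hj : j < m) :
    c j ∉ (range j).image c := by
  simp only [mem_image, mem_range, not_exists, not_and]
  exact fun i hi hij => hi.ne (hc.2.1 i (by omega) j hj hij)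

theorem perR_image_range_succ (hsymm : ∀ a b : E, a ≠ b → d a b = d b a)
    (hultra : ∀ a b c : E, a ≠ b → a ≠ c → b ≠ c → d a b ≤ max (d a c) (d b c))
    (hc : IsGreedy w d r C m c) {j : ℕ} (hj : j < m) :
    perR w d r ((range (j + 1)).image c) =
      perR w d r ((range j).image c) + w (c j) + distR d r ((range j).image c) (c j) := by
  rw [range_add_one, image_insert, perR_insert w d r hsymm hultra _ (hc.notMem_image_range hj)]

theorem perR_le_perR_image_range (hsymm : ∀ a b : E, a ≠ b → d a b = d b a)
    (hultra : ∀ a b c : E, a ≠ b → a ≠ c → b ≠ c → d a b ≤ max (d a c) (d b c))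
    (hc : IsGreedy w d r C m c) {j : ℕ} (hj : j ≤ m) {B : Finset E} (hBC : B ⊆ C)
    (hB : B.card = j) :
    perR w d r B ≤ perR w d r ((range j).image c) := by
  induction j generalizing B with
  | zero => simp [card_eq_zero.mp hB]
  | succ j ih =>
    set P := (range j).image c
    obtain ⟨y, hy, hle⟩ := exists_mem_sdiff_distR_erase_le d r hultra (X := P) (Y := B)
      (by rw [hc.card_image_range (by omega), hB])
    obtain ⟨hyB, hyP⟩ := mem_sdiff.mp hy
    have hgreedy := hc.2.2 j (by omega) y (hBC hyB) hyP
    rw [perR_insert w d r hsymm hultra _ hyP,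
      perR_insert w d r hsymm hultra _ (hc.notMem_image_range (by omega))] at hgreedy
    have hPB : perR w d r (B.erase y) ≤ perR w d r P :=
      ih (by omega) ((erase_subset y B).trans hBC) (by rw [card_erase_of_mem hyB, hB]; rfl)
    calc perR w d r B = perR w d r (B.erase y) + w y + distR d r (B.erase y) y := by
          rw [← perR_insert w d r hsymm hultra _ (notMem_erase y B), insert_erase hyB]
      _ ≤ perR w d r P + w y + distR d r P y := by gcongr
      _ ≤ perR w d r ((range (j + 1)).image c) := by
          rw [hc.perR_image_range_succ hsymm hultra (by omega)]; exact hgreedy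

theorem perR_image_range_eq (hsymm : ∀ a b : E, a ≠ b → d a b = d b a)
    (hultra : ∀ a b c : E, a ≠ b → a ≠ c → b ≠ c → d a b ≤ max (d a c) (d b c))
    {c' : ℕ → E} (hc : IsGreedy w d r C m c) (hc' : IsGreedy w d r C m c') {j : ℕ}
    (hj : j ≤ m) :
    perR w d r ((range j).image c) = perR w d r ((range j).image c') :=
  le_antisymm
    (hc'.perR_le_perR_image_range hsymm hultra hj (hc.image_range_subset hj)
      (hc.card_image_range hj))
    (hc.perR_le_perR_image_range hsymm hultra hj (hc'.image_range_subset hj)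
      (hc'.card_image_range hj))

end IsGreedy

end

theorem stmt6 {E : Type*} [DecidableEq E] (w : E → ℝ) (d : E → E → ℝ)
    (hsymm : ∀ a b : E, a ≠ b → d a b = d b a)
    (hultra : ∀ a b c : E, a ≠ b → a ≠ c → b ≠ c → d a b ≤ max (d a c) (d b c))
    (r m : ℕ) (C : Finset E) (c c' : ℕ → E)
    (hc : IsGreedy w d r C m c) (hc' : IsGreedy w d r C m c') :
    ∀ j < m,
      w (c j) + distR d r ((Finset.range j).image c) (c j) =
        w (c' j) + distR d r ((Finset.range j).image c') (c' j) := by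
  intro j hj
  have hsucc := hc.perR_image_range_succ hsymm hultra hj
  have hsucc' := hc'.perR_image_range_succ hsymm hultra hj
  have hprefix := hc.perR_image_range_eq hsymm hultra hc' hj.le
  have hprefix_succ := hc.perR_image_range_eq hsymm hultra hc' (Nat.succ_le_of_lt hj)
  linarith
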